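/- arXiv:2011.04794 — 3 statements merged into one kernel-verified Lean document; each statement's English description precedes it below -/
import Mathlib

section
/- If given a variable y the components x_1,...,x_n are conditionally independent (p(X|y) = ∏_i p(x_i|y)), then TC(X) = Σ_{i=1}^n I(x_i; y) − I(X; y). -/
/-- Probability of the event `f = b` under weight function `μ` (the pmf of `f`). -/
noncomputable def margPMF {Ω β : Type*} [Fintype Ω] [DecidableEq β]
    (μ : Ω → ℝ) (f : Ω → β) (b : β) : ℝ :=
  ∑ ω, if f ω = b then μ ω else 0

/-- Joint pmf of the family of random variables `x`. -/
noncomputable def jointPMF {Ω ι α : Type*} [Fintype Ω] [Fintype ι] [DecidableEq ι]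
    [DecidableEq α] (μ : Ω → ℝ) (x : ι → Ω → α) (v : ι → α) : ℝ :=
  margPMF μ (fun ω i => x i ω) v

/-- Total correlation: expectation of the log-ratio of the joint pmf to the
product of marginal pmfs. -/
noncomputable def totalCorr {Ω ι α : Type*} [Fintype Ω] [Fintype ι] [DecidableEq ι]
    [DecidableEq α] (μ : Ω → ℝ) (x : ι → Ω → α) : ℝ :=
  ∑ ω, μ ω * Real.log (jointPMF μ x (fun i => x i ω) / ∏ i, margPMF μ (x i) (x i ω))

/-- Mutual information between random variables `u` and `v`. -/
noncomputable def MI {Ω β γ : Type*} [Fintype Ω] [DecidableEq β] [DecidableEq γ]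
    (μ : Ω → ℝ) (u : Ω → β) (v : Ω → γ) : ℝ :=
  ∑ ω, μ ω * Real.log (margPMF μ (fun ω => (u ω, v ω)) (u ω, v ω) /
    (margPMF μ u (u ω) * margPMF μ v (v ω)))

open Real Finset

lemma le_margPMF {Ω β : Type*} [Fintype Ω] [DecidableEq β] {μ : Ω → ℝ} (hμ : ∀ ω, 0 ≤ μ ω)
    (f : Ω → β) (ω : Ω) : μ ω ≤ margPMF μ f (f ω) := by
  simpa [margPMF] using single_le_sum (f := fun ω' => if f ω' = f ω then μ ω' else 0)
    (fun ω' _ => by split_ifs <;> simp [hμ ω']) (mem_univ ω)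

lemma margPMF_pos {Ω β : Type*} [Fintype Ω] [DecidableEq β] {μ : Ω → ℝ} (hμ : ∀ ω, 0 ≤ μ ω)
    (f : Ω → β) {ω : Ω} (hω : 0 < μ ω) : 0 < margPMF μ f (f ω) :=
  hω.trans_le (le_margPMF hμ f ω)

/- With `pX = p(X)`, `pXi i = p(xᵢ)`, `pY = p(y)`, `pXY = p(X, y)`, `pXiY i = p(xᵢ, y)`, this is the
pointwise form of `TC(X) = Σᵢ I(xᵢ; y) − I(X; y)`: already before taking logarithms,
`∏ᵢ p(xᵢ, y) / (p(xᵢ) p(y)) = (p(X, y) / p(y)) / ∏ᵢ p(xᵢ)`. -/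
lemma log_div_prod_eq_sum_log_sub_log {ι : Type*} [Fintype ι] {pX pY pXY : ℝ}
    {pXi pXiY : ι → ℝ} (hX : 0 < pX) (hY : 0 < pY) (hXY : 0 < pXY) (hXi : ∀ i, 0 < pXi i)
    (hXiY : ∀ i, 0 < pXiY i) (hci : pXY / pY = ∏ i, pXiY i / pY) :
    log (pX / ∏ i, pXi i) = ∑ i, log (pXiY i / (pXi i * pY)) - log (pXY / (pX * pY)) := by
  have hprod : ∏ i, pXiY i / (pXi i * pY) = pXY / pY / ∏ i, pXi i := by
    simp only [hci, div_mul_eq_div_div_swap, prod_div_distrib]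
  have hMI_pos : 0 < pXY / (pX * pY) := by positivity
  have hXi_prod : 0 < ∏ i, pXi i := prod_pos fun i _ => hXi i
  rw [← log_prod fun i _ => (div_pos (hXiY i) (mul_pos (hXi i) hY)).ne',
    ← log_div (prod_pos fun i _ => div_pos (hXiY i) (mul_pos (hXi i) hY)).ne' hMI_pos.ne', hprod]
  congr 1
  field_simp

theorem tc_of_cond_indep_general {Ω ι α β : Type*} [Fintype Ω] [Fintype ι] [DecidableEq ι]
    [DecidableEq α] [DecidableEq β]
    (μ : Ω → ℝ) (hμ : ∀ ω, 0 ≤ μ ω)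
    (x : ι → Ω → α) (y : Ω → β)
    (hci : ∀ b : β, 0 < margPMF μ y b → ∀ v : ι → α,
      margPMF μ (fun ω => ((fun i => x i ω), y ω)) (v, b) / margPMF μ y b =
        ∏ i, margPMF μ (fun ω => (x i ω, y ω)) (v i, b) / margPMF μ y b) :
    totalCorr μ x = (∑ i, MI μ (x i) y) - MI μ (fun ω => fun i => x i ω) y := by
  unfold totalCorr MI
  rw [sum_comm, ← sum_sub_distrib]
  refine sum_congr rfl fun ω _ => ?_
  rw [← mul_sum, ← mul_sub]
  rcases (hμ ω).eq_or_lt with h0 | hpos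
  · simp [← h0]
  have hY := margPMF_pos hμ y hpos
  congr 1
  exact log_div_prod_eq_sum_log_sub_log (margPMF_pos hμ _ hpos) hY (margPMF_pos hμ _ hpos)
    (fun i => margPMF_pos hμ (x i) hpos) (fun i => margPMF_pos hμ _ hpos)
    (hci (y ω) hY fun i => x i ω)

/-- **Conditional-independence TC formula (Poole et al.).** If, given `y`, the
variables `x_1, …, x_n` are conditionally independent
(`p(X|y) = ∏_i p(x_i|y)` for every `y`-value of positive probability), then
`TC(X) = Σ_i I(x_i; y) − I(X; y)`. -/
theorem tc_of_cond_indep {Ω ι α β : Type*} [Fintype Ω] [Fintype ι] [DecidableEq ι]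
    [DecidableEq α] [DecidableEq β]
    (μ : Ω → ℝ) (hμ : ∀ ω, 0 ≤ μ ω) (hsum : ∑ ω, μ ω = 1)
    (x : ι → Ω → α) (y : Ω → β)
    (hci : ∀ b : β, 0 < margPMF μ y b → ∀ v : ι → α,
      margPMF μ (fun ω => ((fun i => x i ω), y ω)) (v, b) / margPMF μ y b =
        ∏ i, margPMF μ (fun ω => (x i ω, y ω)) (v i, b) / margPMF μ y b) :
    totalCorr μ x = (∑ i, MI μ (x i) y) - MI μ (fun ω => fun i => x i ω) y :=
  tc_of_cond_indep_general μ hμ x y hci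
end

section
/- The NWJ bound is a lower bound on mutual information: for any measurable function f, I(x;y) ≥ E_{p(x,y)}[f(x,y)] − E_{p(x)p(y)}[e^{f(x,y)−1}]. -/
lemma regroup {Ω β γ : Type*} [Fintype Ω] [Fintype β] [Fintype γ]
    [DecidableEq β] [DecidableEq γ]
    (μ : Ω → ℝ) (u : Ω → β) (v : Ω → γ) (g : β × γ → ℝ) :
    ∑ ω, μ ω * g (u ω, v ω)
      = ∑ a, ∑ b, margPMF μ (fun ω => (u ω, v ω)) (a, b) * g (a, b) := by
  simp only [margPMF, Finset.sum_mul, ite_mul, zero_mul]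
  have : ∀ a, ∑ b, ∑ ω, (if (u ω, v ω) = (a, b) then μ ω * g (a, b) else 0)
      = ∑ ω, ∑ b, (if (u ω, v ω) = (a, b) then μ ω * g (a, b) else 0) :=
    fun a => Finset.sum_comm
  simp only [this]
  rw [Finset.sum_comm]
  apply Finset.sum_congr rfl
  intro ω _
  simp [Prod.mk.injEq, ite_and, Finset.sum_ite_eq]

lemma pointwise (p qa qb F : ℝ) (hp : 0 ≤ p) (hqa : 0 ≤ qa) (hqb : 0 ≤ qb)
    (h1 : p ≤ qa) (h2 : p ≤ qb) :
    p * F - qa * qb * Real.exp (F - 1) ≤ p * Real.log (p / (qa * qb)) := by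
  rcases eq_or_lt_of_le hp with h | hp0
  · simp [← h]
    positivity
  · have hq : 0 < qa * qb := mul_pos (lt_of_lt_of_le hp0 h1) (lt_of_lt_of_le hp0 h2)
    set q := qa * qb
    have hr : 0 < p / q := div_pos hp0 hq
    have key : (F - 1 - Real.log (p / q)) + 1 ≤ Real.exp (F - 1 - Real.log (p / q)) :=
      Real.add_one_le_exp _
    have hexp : Real.exp (F - 1 - Real.log (p / q)) = Real.exp (F - 1) * (q / p) := by
      rw [Real.exp_sub, Real.exp_log hr]
      field_simp
    rw [hexp] at key
    have := mul_le_mul_of_nonneg_left key hp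
    calc p * F - q * Real.exp (F - 1)
        = p * ((F - 1 - Real.log (p/q)) + 1) + p * Real.log (p/q) - q * Real.exp (F-1) := by ring
      _ ≤ p * (Real.exp (F - 1) * (q / p)) + p * Real.log (p/q) - q * Real.exp (F-1) := by linarith
      _ = p * Real.log (p/q) := by field_simp; ring

/-- **NWJ lower bound on mutual information.** For any function `f` on pairs,
`I(x;y) ≥ E_{p(x,y)}[f] − E_{p(x)p(y)}[e^{f−1}]`. -/
theorem nwj_lower_bound {Ω β γ : Type*} [Fintype Ω] [Fintype β] [Fintype γ]
    [DecidableEq β] [DecidableEq γ]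
    (μ : Ω → ℝ) (hμ : ∀ ω, 0 ≤ μ ω) (hsum : ∑ ω, μ ω = 1)
    (u : Ω → β) (v : Ω → γ) (f : β × γ → ℝ) :
    (∑ ω, μ ω * f (u ω, v ω)) -
        (∑ a, ∑ b, margPMF μ u a * margPMF μ v b * Real.exp (f (a, b) - 1)) ≤
      MI μ u v := by
  have h1 := regroup μ u v f
  have h2 := regroup μ u v (fun p =>
    Real.log (margPMF μ (fun ω => (u ω, v ω)) p / (margPMF μ u p.1 * margPMF μ v p.2)))
  simp only at h2
  rw [MI, h2, h1, ← Finset.sum_sub_distrib]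
  apply Finset.sum_le_sum
  intro a _
  rw [← Finset.sum_sub_distrib]
  apply Finset.sum_le_sum
  intro b _
  have hP : 0 ≤ margPMF μ (fun ω => (u ω, v ω)) (a, b) :=
    Finset.sum_nonneg fun ω _ => by split_ifs <;> simp [hμ ω]
  have hPa : margPMF μ (fun ω => (u ω, v ω)) (a, b) ≤ margPMF μ u a := by
    apply Finset.sum_le_sum
    intro ω _
    split_ifs with h h' h'
    · exact le_refl _
    · exact absurd (congrArg Prod.fst h) h'
    · exact hμ ω
    · exact le_refl _
  have hPb : margPMF μ (fun ω => (u ω, v ω)) (a, b) ≤ margPMF μ v b := by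
    apply Finset.sum_le_sum
    intro ω _
    split_ifs with h h' h'
    · exact le_refl _
    · exact absurd (congrArg Prod.snd h) h'
    · exact hμ ω
    · exact le_refl _
  have hqa : 0 ≤ margPMF μ u a := le_trans hP hPa
  have hqb : 0 ≤ margPMF μ v b := le_trans hP hPb
  exact pointwise _ _ _ _ hP hqa hqb hPa hPb
end

section
/- The CLUB estimator is an upper bound on mutual information: I(x;y) ≤ E_{p(x,y)}[log p(y|x)] − E_{p(x)p(y)}[log p(y|x)], where p(y|x) is the true conditional distribution. -/
open Finset Real

lemma mul_log_div_le_sub {p q : ℝ} (hp : 0 ≤ p) (hq : 0 < q) : p * log (q / p) ≤ q - p := by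
  rcases hp.eq_or_lt with rfl | hp
  · simpa using hq.le
  · calc p * log (q / p) ≤ p * (q / p - 1) :=
          mul_le_mul_of_nonneg_left (log_le_sub_one_of_pos (div_pos hq hp)) hp.le
      _ = q - p := by field_simp

lemma sum_mul_log_div_le_sum_sub {ι : Type*} (s : Finset ι) {p q : ι → ℝ}
    (hp : ∀ i ∈ s, 0 ≤ p i) (hq : ∀ i ∈ s, 0 < q i) :
    ∑ i ∈ s, p i * log (q i / p i) ≤ ∑ i ∈ s, q i - ∑ i ∈ s, p i := by
  rw [← sum_sub_distrib]
  exact sum_le_sum fun i hi => mul_log_div_le_sub (hp i hi) (hq i hi)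

section margPMF

variable {Ω β γ : Type*} [Fintype Ω] (μ : Ω → ℝ)

lemma sum_mul_comp_eq_sum_margPMF [Fintype β] [DecidableEq β] (x : Ω → β) (g : β → ℝ) :
    ∑ ω, μ ω * g (x ω) = ∑ b, margPMF μ x b * g b := by
  simp_rw [margPMF, sum_mul, ite_mul, zero_mul]
  rw [sum_comm]
  simp

lemma sum_margPMF [Fintype β] [DecidableEq β] (x : Ω → β) :
    ∑ b, margPMF μ x b = ∑ ω, μ ω := by
  simpa using (sum_mul_comp_eq_sum_margPMF μ x fun _ => 1).symm

variable [DecidableEq β] [DecidableEq γ] (u : Ω → β) (v : Ω → γ)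

lemma margPMF_fst_eq_sum [Fintype γ] (a : β) :
    margPMF μ u a = ∑ b, margPMF μ (fun ω => (u ω, v ω)) (a, b) := by
  simp_rw [margPMF]
  rw [sum_comm]
  simp [ite_and]

lemma margPMF_snd_eq_sum [Fintype β] (b : γ) :
    margPMF μ v b = ∑ a, margPMF μ (fun ω => (u ω, v ω)) (a, b) := by
  simp_rw [margPMF]
  rw [sum_comm]
  simp [ite_and]

end margPMF

section club

variable {β γ : Type*} [Fintype β] [Fintype γ] {J : β → γ → ℝ} {P : β → ℝ} {Q : γ → ℝ}

lemma club_sub_sum_mul_log_eq (hJ : ∀ a b, 0 < J a b) (hP : ∀ a, P a = ∑ b, J a b)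
    (hQ : ∀ b, Q b = ∑ a, J a b) (hP1 : ∑ a, P a = 1) :
    (∑ a, ∑ b, J a b * log (J a b / P a) - ∑ a, ∑ b, P a * Q b * log (J a b / P a)) -
        ∑ a, ∑ b, J a b * log (J a b / (P a * Q b)) =
      -∑ a, ∑ b, P a * Q b * log (J a b / (P a * Q b)) := by
  have hP_pos : ∀ a b, 0 < P a := fun a b =>
    (hJ a b).trans_le (hP a ▸ single_le_sum (fun b _ => (hJ a b).le) (mem_univ b))
  have hQ_pos : ∀ a b, 0 < Q b := fun a b =>
    (hJ a b).trans_le (hQ b ▸ single_le_sum (fun a _ => (hJ a b).le) (mem_univ a))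
  have hlog : ∀ a b, log (J a b / (P a * Q b)) = log (J a b / P a) - log (Q b) := fun a b => by
    rw [← div_div, log_div (div_pos (hJ a b) (hP_pos a b)).ne' (hQ_pos a b).ne']
  have hcross : ∑ a, ∑ b, J a b * log (Q b) = ∑ a, ∑ b, P a * Q b * log (Q b) := by
    simp_rw [mul_assoc, ← mul_sum, ← sum_mul, hP1, one_mul]
    rw [sum_comm]
    simp_rw [← sum_mul, hQ]
  simp_rw [hlog, mul_sub, sum_sub_distrib]
  linear_combination hcross

theorem sum_mul_log_div_mul_le_club (hJ : ∀ a b, 0 < J a b) (hP : ∀ a, P a = ∑ b, J a b)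
    (hQ : ∀ b, Q b = ∑ a, J a b) (hJ1 : ∑ a, ∑ b, J a b = 1) :
    ∑ a, ∑ b, J a b * log (J a b / (P a * Q b)) ≤
      ∑ a, ∑ b, J a b * log (J a b / P a) - ∑ a, ∑ b, P a * Q b * log (J a b / P a) := by
  have hP1 : ∑ a, P a = 1 := by simp_rw [hP]; exact hJ1
  have hQ1 : ∑ b, Q b = 1 := by simp_rw [hQ]; rw [sum_comm]; exact hJ1
  have hP_nonneg : ∀ a, 0 ≤ P a := fun a => hP a ▸ sum_nonneg fun b _ => (hJ a b).le
  have hQ_nonneg : ∀ b, 0 ≤ Q b := fun b => hQ b ▸ sum_nonneg fun a _ => (hJ a b).le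
  have hgibbs : ∑ a, ∑ b, P a * Q b * log (J a b / (P a * Q b)) ≤ 0 := by
    have := sum_mul_log_div_le_sum_sub (univ : Finset (β × γ)) (p := fun x => P x.1 * Q x.2)
      (q := fun x => J x.1 x.2) (fun x _ => mul_nonneg (hP_nonneg _) (hQ_nonneg _))
      (fun x _ => hJ _ _)
    simp only [univ_product_univ.symm, sum_product] at this
    rwa [hJ1, ← sum_mul_sum, hP1, hQ1, mul_one, sub_self] at this
  linarith [club_sub_sum_mul_log_eq hJ hP hQ hP1]

end club

theorem club_upper_bound_general {Ω β γ : Type*} [Fintype Ω] [Fintype β] [Fintype γ]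
    [DecidableEq β] [DecidableEq γ]
    (μ : Ω → ℝ) (hsum : ∑ ω, μ ω = 1)
    (u : Ω → β) (v : Ω → γ)
    (hpos : ∀ a b, 0 < margPMF μ (fun ω => (u ω, v ω)) (a, b)) :
    MI μ u v ≤
      (∑ ω, μ ω *
          Real.log (margPMF μ (fun ω => (u ω, v ω)) (u ω, v ω) / margPMF μ u (u ω))) -
        ∑ a, ∑ b, margPMF μ u a * margPMF μ v b *
          Real.log (margPMF μ (fun ω => (u ω, v ω)) (a, b) / margPMF μ u a) := by
  set uv : Ω → β × γ := fun ω => (u ω, v ω)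
  have hJ1 : ∑ a, ∑ b, margPMF μ uv (a, b) = 1 := by
    rw [← Fintype.sum_prod_type', sum_margPMF, hsum]
  rw [MI, sum_mul_comp_eq_sum_margPMF μ uv
      fun c => log (margPMF μ uv c / (margPMF μ u c.1 * margPMF μ v c.2)),
    sum_mul_comp_eq_sum_margPMF μ uv fun c => log (margPMF μ uv c / margPMF μ u c.1),
    Fintype.sum_prod_type, Fintype.sum_prod_type]
  exact sum_mul_log_div_mul_le_club hpos (margPMF_fst_eq_sum μ u v) (margPMF_snd_eq_sum μ u v) hJ1

/-- **CLUB upper bound on mutual information.** With the true conditional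
`p(y|x) = p(x,y)/p(x)` (all joint probabilities assumed strictly positive, so
that in particular both marginals are strictly positive),
`I(x;y) ≤ E_{p(x,y)}[log p(y|x)] − E_{p(x)p(y)}[log p(y|x)]`. -/
theorem club_upper_bound {Ω β γ : Type*} [Fintype Ω] [Fintype β] [Fintype γ]
    [DecidableEq β] [DecidableEq γ]
    (μ : Ω → ℝ) (hμ : ∀ ω, 0 ≤ μ ω) (hsum : ∑ ω, μ ω = 1)
    (u : Ω → β) (v : Ω → γ)
    (hpos : ∀ a b, 0 < margPMF μ (fun ω => (u ω, v ω)) (a, b)) :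
    MI μ u v ≤
      (∑ ω, μ ω *
          Real.log (margPMF μ (fun ω => (u ω, v ω)) (u ω, v ω) / margPMF μ u (u ω))) -
        ∑ a, ∑ b, margPMF μ u a * margPMF μ v b *
          Real.log (margPMF μ (fun ω => (u ω, v ω)) (a, b) / margPMF μ u a) :=
  club_upper_bound_general μ hsum u v hpos
end
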